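/- Fix a real ε with 0 < ε < 1 and set β := 3(2 + ε)/ε, f(β) := 1 − 3/β, and K an integer. Let G = (V, E) be a finite simple graph, let ℓ : V → ℤ satisfy ℓ(v) ≥ K for all v, let w : E → ℝ≥0 be edge weights with node weights W_v, let E^r := {(u,v) ∈ E : ℓ(u) = ℓ(v) = K}, and let w^r : E → ℝ≥0 be residual edge weights with w^r(e) = 0 for every e ∉ E^r, with residual node weights W^r_v. Assume: (i) W_v ≥ f(β) for every node v with ℓ(v) > K; (a) W_v + W^r_v ≤ 1 for every node v; and (b) every edge (u,v) ∈ E^r has an endpoint x ∈ {u,v} with W_x + W^r_x ≥ 1 − 1/β. Then the edge weights e ↦ w(e) + w^r(e) form a fractional matching of G of size at least 1/(2 + ε) times the size of every fractional matching of G, and the set V* := {v ∈ V : W_v + W^r_v ≥ f(β)} is a vertex cover of G with |V*| ≤ (2 + ε) · |C| for every vertex cover C of G. -/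

import Mathlib

/-!
Both claims rest on comparing everything with `x := w + w^r`. The levels force
`V* = {v | f(β) ≤ W_v + W^r_v}` to be a vertex cover: an endpoint above level `K` already
has `W_v ≥ f(β)` by (i), and an edge of `E^r` has an endpoint with weight `≥ 1 - 1/β ≥ f(β)`
by (b). Counting each edge at both endpoints gives `f(β) |V*| ≤ 2 |x|`, and `2 / f(β) = 2 + ε`,
so `|V*| ≤ (2 + ε) |x|`. Weak LP duality (a fractional matching is no larger than any vertex
cover) then bounds `|w'| ≤ |V*|` for a fractional matching `w'` and, since `x` is a fractional
matching by (a), `|x| ≤ |C|` for a vertex cover `C`.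
-/

open Finset

variable {V : Type*}

/-- The weight of a node `v`: the sum of the weights of the edges incident on `v`. -/
noncomputable def nodeWeight [Fintype V] [DecidableEq V] (G : SimpleGraph V)
    [DecidableRel G.Adj] (w : Sym2 V → ℝ) (v : V) : ℝ :=
  ∑ e ∈ G.edgeFinset, if v ∈ e then w e else 0

/-- A fractional matching: nonnegative edge weights with all node weights at most 1. -/
def IsFractionalMatching [Fintype V] [DecidableEq V] (G : SimpleGraph V)
    [DecidableRel G.Adj] (w : Sym2 V → ℝ) : Prop :=
  (∀ e ∈ G.edgeFinset, 0 ≤ w e) ∧ ∀ v, nodeWeight G w v ≤ 1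

/-- A vertex cover: every edge has at least one endpoint in the set. -/
def IsVertexCover (G : SimpleGraph V) (C : Set V) : Prop :=
  ∀ ⦃u v : V⦄, G.Adj u v → u ∈ C ∨ v ∈ C

section NodeWeight

variable [Fintype V] [DecidableEq V] (G : SimpleGraph V) [DecidableRel G.Adj]

lemma nodeWeight_nonneg {w : Sym2 V → ℝ} (hw : ∀ e ∈ G.edgeFinset, 0 ≤ w e) (v : V) :
    0 ≤ nodeWeight G w v :=
  sum_nonneg fun e he => by split_ifs <;> simp [hw e he]

lemma nodeWeight_add (w w' : Sym2 V → ℝ) (v : V) :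
    nodeWeight G (fun e => w e + w' e) v = nodeWeight G w v + nodeWeight G w' v := by
  simp only [nodeWeight, ← sum_add_distrib]
  exact sum_congr rfl fun e _ => by split_ifs <;> simp

lemma sum_nodeWeight (w : Sym2 V → ℝ) :
    ∑ v, nodeWeight G w v = 2 * ∑ e ∈ G.edgeFinset, w e := by
  unfold nodeWeight
  rw [sum_comm, mul_sum]
  refine sum_congr rfl fun e he => ?_
  have hends : univ.filter (· ∈ e) = e.toFinset := by ext; simp [Sym2.mem_toFinset]
  have hloop : ¬e.IsDiag := G.not_isDiag_of_mem_edgeSet (SimpleGraph.mem_edgeFinset.mp he)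
  rw [← sum_filter, hends, sum_const, nsmul_eq_mul, Sym2.card_toFinset_of_not_isDiag e hloop]
  norm_num

lemma sum_le_sum_nodeWeight_of_isVertexCover {w : Sym2 V → ℝ}
    (hw : ∀ e ∈ G.edgeFinset, 0 ≤ w e) {S : Finset V} (hS : IsVertexCover G (S : Set V)) :
    ∑ e ∈ G.edgeFinset, w e ≤ ∑ v ∈ S, nodeWeight G w v := by
  unfold nodeWeight
  rw [sum_comm]
  refine sum_le_sum fun e he => ?_
  have hterm_nonneg : ∀ v ∈ S, 0 ≤ if v ∈ e then w e else 0 := fun v _ => by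
    split_ifs <;> simp [hw e he]
  obtain ⟨u, huS, hue⟩ : ∃ u ∈ S, u ∈ e := by
    induction e using Sym2.ind with
    | _ a b =>
      rcases hS (SimpleGraph.mem_edgeFinset.mp he) with h | h
      · exact ⟨a, h, Sym2.mem_mk_left a b⟩
      · exact ⟨b, h, Sym2.mem_mk_right a b⟩
  simpa [hue] using single_le_sum hterm_nonneg huS

lemma IsFractionalMatching.sum_le_ncard {w : Sym2 V → ℝ} (hw : IsFractionalMatching G w)
    {C : Set V} (hC : IsVertexCover G C) : ∑ e ∈ G.edgeFinset, w e ≤ C.ncard := by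
  classical
  calc ∑ e ∈ G.edgeFinset, w e ≤ ∑ v ∈ C.toFinset, nodeWeight G w v :=
        sum_le_sum_nodeWeight_of_isVertexCover G hw.1 (by simpa using hC)
    _ ≤ ∑ v ∈ C.toFinset, (1 : ℝ) := sum_le_sum fun v _ => hw.2 v
    _ = C.ncard := by simp [Set.ncard_eq_toFinset_card']

lemma ncard_setOf_div_le_nodeWeight_le {w : Sym2 V → ℝ} (hw : ∀ e ∈ G.edgeFinset, 0 ≤ w e)
    {c : ℝ} (hc : 0 < c) :
    ({v | 2 / c ≤ nodeWeight G w v}.ncard : ℝ) ≤ c * ∑ e ∈ G.edgeFinset, w e := by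
  classical
  set S := univ.filter fun v => 2 / c ≤ nodeWeight G w v
  have hcount : 2 / c * #S ≤ 2 * ∑ e ∈ G.edgeFinset, w e :=
    calc 2 / c * #S ≤ ∑ v ∈ S, nodeWeight G w v := by
          simpa [mul_comm] using card_nsmul_le_sum S _ _ fun v hv => (mem_filter.mp hv).2
      _ ≤ ∑ v, nodeWeight G w v :=
          sum_le_sum_of_subset_of_nonneg (subset_univ S) fun v _ _ => nodeWeight_nonneg G hw v
      _ = 2 * ∑ e ∈ G.edgeFinset, w e := sum_nodeWeight G w
  have hS : {v | 2 / c ≤ nodeWeight G w v}.ncard = #S := by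
    rw [Set.ncard_eq_toFinset_card']; congr 1; ext; simp [S]
  rw [hS]
  rw [div_mul_eq_mul_div, div_le_iff₀ hc] at hcount
  linarith

end NodeWeight

lemma isVertexCover_setOf_le_of_levels {G : SimpleGraph V} {W Wr : V → ℝ} {t s : ℝ}
    (hts : t ≤ s) (hWr : ∀ v, 0 ≤ Wr v) {K : ℤ} {ℓ : V → ℤ} (hK : ∀ v, K ≤ ℓ v)
    (hi : ∀ v, K < ℓ v → t ≤ W v)
    (hb : ∀ u v, G.Adj u v → ℓ u = K → ℓ v = K → s ≤ W u + Wr u ∨ s ≤ W v + Wr v) :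
    IsVertexCover G {v | t ≤ W v + Wr v} := by
  have high : ∀ v, K < ℓ v → t ≤ W v + Wr v := fun v hv =>
    (hi v hv).trans (le_add_of_nonneg_right (hWr v))
  intro u v huv
  rcases (hK u).lt_or_eq with hu | hu
  · exact Or.inl (high u hu)
  rcases (hK v).lt_or_eq with hv | hv
  · exact Or.inr (high v hv)
  exact (hb u v huv hu.symm hv.symm).imp hts.trans hts.trans

lemma one_sub_three_div_eq {ε β : ℝ} (hε : 0 < ε) (hβ : β = 3 * (2 + ε) / ε) :
    1 - 3 / β = 2 / (2 + ε) := by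
  subst hβ
  field_simp
  ring

theorem stmt11_general [Fintype V] [DecidableEq V] (G : SimpleGraph V) [DecidableRel G.Adj]
    (ε β : ℝ) (hε0 : 0 < ε) (hβ : β = 3 * (2 + ε) / ε)
    (K : ℤ) (ℓ : V → ℤ) (hK : ∀ v : V, K ≤ ℓ v)
    (w wr : Sym2 V → ℝ)
    (hw : ∀ e ∈ G.edgeFinset, 0 ≤ w e) (hwr : ∀ e ∈ G.edgeFinset, 0 ≤ wr e)
    -- (i) every node at level above K has weight at least f(β) = 1 - 3/β
    (hi : ∀ v : V, K < ℓ v → 1 - 3 / β ≤ nodeWeight G w v)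
    -- (a) W_v + W^r_v ≤ 1 for every node v
    (ha : ∀ v : V, nodeWeight G w v + nodeWeight G wr v ≤ 1)
    -- (b) every edge of E^r has an endpoint x with W_x + W^r_x ≥ 1 - 1/β
    (hb : ∀ u v : V, G.Adj u v → ℓ u = K → ℓ v = K →
      1 - 1 / β ≤ nodeWeight G w u + nodeWeight G wr u ∨
      1 - 1 / β ≤ nodeWeight G w v + nodeWeight G wr v) :
    (IsFractionalMatching G (fun e => w e + wr e) ∧
      ∀ w' : Sym2 V → ℝ, IsFractionalMatching G w' →
        (1 / (2 + ε)) * ∑ e ∈ G.edgeFinset, w' e ≤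
          ∑ e ∈ G.edgeFinset, (w e + wr e)) ∧
    (IsVertexCover G {v : V | 1 - 3 / β ≤ nodeWeight G w v + nodeWeight G wr v} ∧
      ∀ C : Set V, IsVertexCover G C →
        (({v : V | 1 - 3 / β ≤ nodeWeight G w v + nodeWeight G wr v} : Set V).ncard : ℝ) ≤
          (2 + ε) * (C.ncard : ℝ)) := by
  have h2ε : 0 < 2 + ε := by linarith
  have hβpos : 0 < β := by rw [hβ]; positivity
  have hcover : IsVertexCover G {v | 1 - 3 / β ≤ nodeWeight G w v + nodeWeight G wr v} :=
    isVertexCover_setOf_le_of_levels (by gcongr; norm_num) (nodeWeight_nonneg G hwr) hK hi hb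
  have hx : IsFractionalMatching G (fun e => w e + wr e) :=
    ⟨fun e he => add_nonneg (hw e he) (hwr e he),
      fun v => (nodeWeight_add G w wr v).trans_le (ha v)⟩
  have hcard : ({v | 1 - 3 / β ≤ nodeWeight G w v + nodeWeight G wr v}.ncard : ℝ) ≤
      (2 + ε) * ∑ e ∈ G.edgeFinset, (w e + wr e) := by
    simpa only [one_sub_three_div_eq hε0 hβ, nodeWeight_add] using
      ncard_setOf_div_le_nodeWeight_le G hx.1 h2ε
  refine ⟨⟨hx, fun w' hw' => ?_⟩, hcover, fun C hC => ?_⟩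
  · rw [one_div_mul_eq_div, div_le_iff₀ h2ε, mul_comm]
    exact (hw'.sum_le_ncard G hcover).trans hcard
  · exact hcard.trans (by gcongr; exact hx.sum_le_ncard G hC)

theorem stmt11 [Fintype V] [DecidableEq V] (G : SimpleGraph V) [DecidableRel G.Adj]
    (ε β : ℝ) (hε0 : 0 < ε) (hε1 : ε < 1) (hβ : β = 3 * (2 + ε) / ε)
    (K : ℤ) (ℓ : V → ℤ) (hK : ∀ v : V, K ≤ ℓ v)
    (w wr : Sym2 V → ℝ)
    (hw : ∀ e ∈ G.edgeFinset, 0 ≤ w e) (hwr : ∀ e ∈ G.edgeFinset, 0 ≤ wr e)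
    -- the residual weights vanish outside E^r = {(u,v) ∈ E : ℓ u = K ∧ ℓ v = K}
    (hwr0 : ∀ u v : V, ¬ (G.Adj u v ∧ ℓ u = K ∧ ℓ v = K) → wr s(u, v) = 0)
    -- (i) every node at level above K has weight at least f(β) = 1 - 3/β
    (hi : ∀ v : V, K < ℓ v → 1 - 3 / β ≤ nodeWeight G w v)
    -- (a) W_v + W^r_v ≤ 1 for every node v
    (ha : ∀ v : V, nodeWeight G w v + nodeWeight G wr v ≤ 1)
    -- (b) every edge of E^r has an endpoint x with W_x + W^r_x ≥ 1 - 1/β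
    (hb : ∀ u v : V, G.Adj u v → ℓ u = K → ℓ v = K →
      1 - 1 / β ≤ nodeWeight G w u + nodeWeight G wr u ∨
      1 - 1 / β ≤ nodeWeight G w v + nodeWeight G wr v) :
    (IsFractionalMatching G (fun e => w e + wr e) ∧
      ∀ w' : Sym2 V → ℝ, IsFractionalMatching G w' →
        (1 / (2 + ε)) * ∑ e ∈ G.edgeFinset, w' e ≤
          ∑ e ∈ G.edgeFinset, (w e + wr e)) ∧
    (IsVertexCover G {v : V | 1 - 3 / β ≤ nodeWeight G w v + nodeWeight G wr v} ∧
      ∀ C : Set V, IsVertexCover G C →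
        (({v : V | 1 - 3 / β ≤ nodeWeight G w v + nodeWeight G wr v} : Set V).ncard : ℝ) ≤
          (2 + ε) * (C.ncard : ℝ)) :=
  stmt11_general G ε β hε0 hβ K ℓ hK w wr hw hwr hi ha hb
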